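/- arXiv:1110.3647 — 4 statements merged into one kernel-verified Lean document; each statement's English description precedes it below -/
import Mathlib

section
/- For s > 0, the operator h_s defined on radial functions of the unit ball by (h_s u)(r) = s^{-1/N'} u(r^s) is a linear isometry of the radial subspace of W^{1,N}_0(B) with respect to the gradient L^N norm, i.e., ‖∇(h_s u)‖_N = ‖∇u‖_N, and the family {h_s}_{s>0} is a multiplicative group: h_s h_t = h_{st}. -/
open MeasureTheory Set

/-- The nonlinear dilation `h_s` acting on radial profiles: `(h_s v)(r) = s^{-1/N'} v(r^s)`,
where `1/N' = (N-1)/N`. -/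
noncomputable def hOp (N : ℕ) (s : ℝ) (v : ℝ → ℝ) : ℝ → ℝ :=
  fun r => s ^ (-(((N:ℝ) - 1)/N)) * v (r ^ s)

/-!
The substitution `ρ = r^s` maps `(0,1)` onto itself with `dρ = s r^{s-1} dr`. By the chain rule
`(h_s v)'(r) = s^{-1/N'} s r^{s-1} v'(r^s)`, and the normalising factor `s^{-1/N'}` is exactly
what makes `|(h_s v)'(r)|^N r^{N-1} = s r^{s-1} |v'(ρ)|^N ρ^{N-1}`, so the weighted Dirichlet
integral is invariant. The group law is `(r^s)^t = r^{st}` together with `s^α t^α = (st)^α`.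
-/

theorem integral_comp_rpow_Ioo_zero_one {E : Type*} [NormedAddCommGroup E] [NormedSpace ℝ E]
    (g : ℝ → E) {p : ℝ} (hp : 0 < p) :
    ∫ x in Ioo 0 1, (p * x ^ (p - 1)) • g (x ^ p) = ∫ y in Ioo 0 1, g y := by
  have himage : (· ^ p) '' Ioo (0 : ℝ) 1 = Ioo 0 1 := by
    rw [(Real.continuous_rpow_const hp.le).continuousOn.image_Ioo_of_strictMonoOn zero_le_one
      ((Real.strictMonoOn_rpow_Ici_of_exponent_pos hp).mono Icc_subset_Ici_self)]
    simp [Real.zero_rpow hp.ne']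
  have hchange := integral_image_eq_integral_abs_deriv_smul (measurableSet_Ioo (a := 0) (b := 1))
    (fun x hx ↦ (Real.hasDerivAt_rpow_const (Or.inl hx.1.ne')).hasDerivWithinAt)
    ((Real.rpow_left_injOn hp.ne').mono fun _ hx ↦ hx.1.le) g
  rw [himage] at hchange
  rw [hchange]
  refine setIntegral_congr_fun measurableSet_Ioo fun x hx ↦ ?_
  rw [abs_of_pos (by have := hx.1; positivity)]

variable {N : ℕ} {s : ℝ}

theorem hOp_const_mul_add (c : ℝ) (u w : ℝ → ℝ) :
    hOp N s (fun r => c * u r + w r) = fun r => c * hOp N s u r + hOp N s w r := by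
  funext r
  simp only [hOp]
  ring

theorem hOp_hOp {t r : ℝ} (hs : 0 ≤ s) (ht : 0 ≤ t) (hr : 0 ≤ r) (u : ℝ → ℝ) :
    hOp N s (hOp N t u) r = hOp N (s * t) u r := by
  simp only [hOp]
  rw [← Real.rpow_mul hr, Real.mul_rpow hs ht]
  ring

theorem hasDerivAt_hOp {v : ℝ → ℝ} {r : ℝ} (hr : r ≠ 0) (hv : DifferentiableAt ℝ v (r ^ s)) :
    HasDerivAt (hOp N s v) (s ^ (-(((N:ℝ) - 1)/N)) * (s * r ^ (s - 1)) * deriv v (r ^ s)) r :=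
  ((hv.hasDerivAt.comp r (Real.hasDerivAt_rpow_const (Or.inl hr))).const_mul _).congr_deriv
    (by ring)

theorem hOp_weight_eq (hN : N ≠ 0) (hs : 0 < s) {r : ℝ} (hr : 0 < r) :
    (s ^ (-(((N:ℝ) - 1)/N)) * (s * r ^ (s - 1))) ^ N * r ^ (N - 1)
      = s * r ^ (s - 1) * (r ^ s) ^ (N - 1) := by
  obtain ⟨n, rfl⟩ : ∃ n, N = n + 1 := ⟨N - 1, by omega⟩
  have hscale : (s ^ (-((((n + 1 : ℕ) : ℝ) - 1)/(n + 1 : ℕ)))) ^ (n + 1) = (s ^ n)⁻¹ := by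
    rw [← Real.rpow_natCast, ← Real.rpow_mul hs.le, ← Real.rpow_natCast, ← Real.rpow_neg hs.le]
    congr 1
    field_simp
    push_cast
    ring
  rw [mul_pow, hscale, Real.rpow_sub_one hr.ne', Nat.add_sub_cancel, mul_pow, div_pow]
  field_simp
  ring

theorem abs_deriv_hOp_pow_mul (hN : N ≠ 0) (hs : 0 < s) {v : ℝ → ℝ}
    (hv : DifferentiableOn ℝ v (Ioo 0 1)) {r : ℝ} (hr : r ∈ Ioo (0 : ℝ) 1) :
    |deriv (hOp N s v) r| ^ N * r ^ (N - 1)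
      = (s * r ^ (s - 1)) * (|deriv v (r ^ s)| ^ N * (r ^ s) ^ (N - 1)) := by
  have hrs : r ^ s ∈ Ioo (0 : ℝ) 1 :=
    ⟨Real.rpow_pos_of_pos hr.1 s, Real.rpow_lt_one hr.1.le hr.2 hs⟩
  rw [(hasDerivAt_hOp hr.1.ne' (hv.differentiableAt (isOpen_Ioo.mem_nhds hrs))).deriv,
    abs_mul, abs_of_pos (by have := hr.1; positivity), mul_pow, mul_right_comm,
    hOp_weight_eq hN hs hr.1]
  ring

theorem integral_abs_deriv_hOp_pow_mul (hN : N ≠ 0) (hs : 0 < s) {v : ℝ → ℝ}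
    (hv : DifferentiableOn ℝ v (Ioo 0 1)) :
    ∫ r in (0:ℝ)..1, |deriv (hOp N s v) r| ^ N * r ^ (N - 1)
      = ∫ r in (0:ℝ)..1, |deriv v r| ^ N * r ^ (N - 1) := by
  simp only [intervalIntegral.integral_of_le zero_le_one, integral_Ioc_eq_integral_Ioo]
  rw [← integral_comp_rpow_Ioo_zero_one (fun ρ ↦ |deriv v ρ| ^ N * ρ ^ (N - 1)) hs]
  exact setIntegral_congr_fun measurableSet_Ioo fun r hr ↦ abs_deriv_hOp_pow_mul hN hs hv hr

/-- For `s > 0`, `h_s` is a linear operator on radial profiles which is an isometry for the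
gradient `L^N` norm, `‖∇(h_s u)‖_N = ‖∇u‖_N` (expressed through the radial Dirichlet
integrals `∫_0^1 |v'(r)|^N r^{N-1} dr`), and the family `{h_s}_{s>0}` is a multiplicative
group: `h_s h_t = h_{st}`. -/
theorem hOp_isometry_group (N : ℕ) (hN : 2 ≤ N) (s : ℝ) (hs : 0 < s)
    (v : ℝ → ℝ) (hv : DifferentiableOn ℝ v (Set.Ioo 0 1)) :
    (∀ (c : ℝ) (u w : ℝ → ℝ),
        hOp N s (fun r => c * u r + w r) = fun r => c * hOp N s u r + hOp N s w r) ∧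
    (∫ r in (0:ℝ)..1, |deriv (hOp N s v) r| ^ N * r ^ (N - 1))
      = (∫ r in (0:ℝ)..1, |deriv v r| ^ N * r ^ (N - 1)) ∧
    (∀ t : ℝ, 0 < t → ∀ u : ℝ → ℝ, ∀ r ∈ Set.Ioo (0:ℝ) 1,
        hOp N s (hOp N t u) r = hOp N (s * t) u r) :=
  ⟨hOp_const_mul_add, integral_abs_deriv_hOp_pow_mul (by omega) hs hv,
    fun _ ht u _ hr ↦ hOp_hOp hs.le ht.le hr.1.le u⟩
end

section
/- For radial u ∈ H^1_{0,rad}(B) with B the unit disk in R^2, if a sequence u_k is bounded in H^1_0 with ‖∇u_k‖_2 ≤ 1 and sup_{r ∈ (0,1)} u_k^*(r)/(1 + log(1/r))^{1/2} → 0, then for every λ > 0, ∫_B (e^{λ u_k^2} − 1) dx → 0. -/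
open MeasureTheory Metric Set Filter

noncomputable abbrev E2 := EuclideanSpace ℝ (Fin 2)

/-- The radial profile `u^*` of the symmetric decreasing rearrangement of `u`:
`u^*(r) = inf { s ≥ 0 : |{|u| > s}| ≤ π r² }`. -/
noncomputable def rearr (u : E2 → ℝ) (r : ℝ) : ℝ :=
  sInf {s : ℝ | 0 ≤ s ∧ (volume {x : E2 | s < |u x|}).toReal ≤ Real.pi * r ^ 2}

/-!
Let `ε` bound the `exp L²` quasinorm of `u`. Choosing `r = exp (1 - s²/ε²)` in
`u^*(r) ≤ ε √(1 + log (1/r))` gives the Gaussian tail `|{|u| > s}| ≤ π e² exp (-2 s²/ε²)` for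
`s > ε`. By the layer-cake formula, `∫ (e^{λu²} - 1) = ∫₀^∞ |{e^{λu²} - 1 > t}| dt`. The levels
`t ≤ e^{λε²} - 1` contribute at most `π (e^{λε²} - 1)` because `u` lives in the unit disk; above
them `{e^{λu²} - 1 > t} = {|u| > √(log (1 + t)/λ)}` has measure at most `π e² (1 + t)^{-2/(λε²)}`,
whose integral is at most `π e² λε²/(2 - λε²)`. Both terms vanish as `ε → 0`.
-/

open scoped ENNReal Topology
open Function

section LevelSets

variable {α : Type*} [MeasurableSpace α] {μ : Measure α} {f : α → ℝ}

lemma measure_lt_abs_ne_top (hf : μ (support f) ≠ ∞) {s : ℝ} (hs : 0 ≤ s) :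
    μ {x | s < |f x|} ≠ ∞ :=
  measure_ne_top_of_subset (fun _ hx => abs_pos.mp (hs.trans_lt hx)) hf

lemma exists_measureReal_lt_abs_le (hm : Measurable f) (hf : μ (support f) ≠ ∞)
    {c : ℝ} (hc : 0 < c) : ∃ s, 0 ≤ s ∧ μ.real {x | s < |f x|} ≤ c := by
  have hlim : Tendsto (fun n : ℕ => μ {x | (n : ℝ) < |f x|}) atTop (𝓝 0) := by
    have hempty : ⋂ n : ℕ, {x | (n : ℝ) < |f x|} = ∅ :=
      eq_empty_of_forall_notMem fun x hx =>
        (exists_nat_ge |f x|).elim fun n hn => (mem_iInter.mp hx n).out.not_ge hn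
    have := tendsto_measure_iInter_atTop (μ := μ) (s := fun n : ℕ => {x | (n : ℝ) < |f x|})
      (fun n => (measurableSet_lt measurable_const hm.abs).nullMeasurableSet)
      (fun m n hmn x (hx : (n : ℝ) < |f x|) => show (m : ℝ) < |f x| from
        lt_of_le_of_lt (by exact_mod_cast hmn) hx)
      ⟨0, by simpa only [Nat.cast_zero] using measure_lt_abs_ne_top hf le_rfl⟩
    rwa [hempty, measure_empty] at this
  obtain ⟨n, hn⟩ := (hlim.eventually_lt_const (ENNReal.ofReal_pos.mpr hc)).exists
  exact ⟨n, n.cast_nonneg, ENNReal.toReal_le_of_le_ofReal hc.le hn.le⟩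

end LevelSets

lemma rearr_nonneg (u : E2 → ℝ) (r : ℝ) : 0 ≤ rearr u r :=
  Real.sInf_nonneg fun _ hs => hs.1

section Rearrangement

variable {u : E2 → ℝ}

lemma pi_mul_sq_lt_measureReal_of_lt_rearr {s r : ℝ} (hs : 0 ≤ s) (h : s < rearr u r) :
    Real.pi * r ^ 2 < volume.real {x | s < |u x|} :=
  lt_of_not_ge fun hle => h.not_ge (csInf_le ⟨0, fun _ ht => ht.1⟩ ⟨hs, hle⟩)

/-- The infimum defining `rearr u r` is attained, by right-continuity of `s ↦ |{|u| > s}|`. -/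
lemma volume_lt_abs_le_of_rearr_le (hm : Measurable u) (hu : volume (support u) ≠ ∞)
    {r b : ℝ} (hr : 0 < r) (hb : rearr u r ≤ b) :
    volume {x | b < |u x|} ≤ ENNReal.ofReal (Real.pi * r ^ 2) := by
  have hunion : {x | b < |u x|} = ⋃ n : ℕ, {x | b + 1 / (n + 1) < |u x|} := by
    ext x
    simp only [mem_iUnion]
    refine ⟨fun (hx : b < |u x|) => ?_,
      fun ⟨n, hn⟩ => (lt_add_of_pos_right b (by positivity)).trans hn⟩
    obtain ⟨n, hn⟩ := exists_nat_one_div_lt (sub_pos.mpr hx)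
    exact ⟨n, show b + 1 / ((n : ℝ) + 1) < |u x| by linarith⟩
  have hmono : Monotone fun n : ℕ => {x | b + 1 / ((n : ℝ) + 1) < |u x|} :=
    fun m n hmn x (hx : b + 1 / ((m : ℝ) + 1) < |u x|) =>
      show b + 1 / ((n : ℝ) + 1) < |u x| from
        lt_of_le_of_lt (by linarith [Nat.one_div_le_one_div (α := ℝ) hmn]) hx
  rw [hunion, hmono.measure_iUnion]
  refine iSup_le fun n => ?_
  obtain ⟨s, hs⟩ := exists_measureReal_lt_abs_le hm hu (by positivity : 0 < Real.pi * r ^ 2)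
  obtain ⟨t, ⟨ht0, ht⟩, htb⟩ :=
    exists_lt_of_csInf_lt ⟨s, hs⟩ (hb.trans_lt (lt_add_of_pos_right b Nat.one_div_pos_of_nat))
  calc volume {x | b + 1 / ((n : ℝ) + 1) < |u x|} ≤ volume {x | t < |u x|} :=
        measure_mono fun x hx => htb.trans hx
    _ ≤ ENNReal.ofReal (Real.pi * r ^ 2) :=
        (ENNReal.le_ofReal_iff_toReal_le (measure_lt_abs_ne_top hu ht0) (by positivity)).mpr ht

lemma volume_lt_abs_le_of_rearr_le_mul_sqrt_log (hm : Measurable u)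
    (hu : volume (support u) ≠ ∞) {ε s : ℝ} (hε : 0 < ε)
    (hb : ∀ r ∈ Ioo (0 : ℝ) 1, rearr u r ≤ ε * √(1 + Real.log (1 / r))) (hs : ε < s) :
    volume {x | s < |u x|} ≤ ENNReal.ofReal (Real.pi * Real.exp (2 * (1 - s ^ 2 / ε ^ 2))) := by
  -- the radius at which the hypothesis reads `rearr u r ≤ s`
  set r := Real.exp (1 - s ^ 2 / ε ^ 2)
  have hsε : 1 < s ^ 2 / ε ^ 2 := (one_lt_div (by positivity)).mpr (by gcongr)
  have hr : r ∈ Ioo (0 : ℝ) 1 := ⟨Real.exp_pos _, Real.exp_lt_one_iff.mpr (by linarith)⟩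
  have hrs : ε * √(1 + Real.log (1 / r)) = s := by
    rw [one_div, Real.log_inv, Real.log_exp, show 1 + -(1 - s ^ 2 / ε ^ 2) = (s / ε) ^ 2 by ring,
      Real.sqrt_sq (div_pos (hε.trans hs) hε).le]
    field_simp
  calc volume {x | s < |u x|} ≤ ENNReal.ofReal (Real.pi * r ^ 2) :=
        volume_lt_abs_le_of_rearr_le hm hu hr.1 (hrs ▸ hb r hr)
    _ = ENNReal.ofReal (Real.pi * Real.exp (2 * (1 - s ^ 2 / ε ^ 2))) := by
        rw [← Real.exp_nat_mul]
        norm_num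

end Rearrangement

lemma setIntegral_ball_eq_integral {E : Type*} [NormedAddCommGroup E] [NormedSpace ℝ E]
    [FiniteDimensional ℝ E] [MeasurableSpace E] [BorelSpace E] [Nontrivial E]
    (μ : Measure E) [μ.IsAddHaarMeasure] {f : E → ℝ} {x : E} {r : ℝ}
    (hf : support f ⊆ closedBall x r) : ∫ y in ball x r, f y ∂μ = ∫ y, f y ∂μ := by
  refine setIntegral_eq_integral_of_ae_compl_eq_zero ?_
  filter_upwards [measure_eq_zero_iff_ae_notMem.mp (Measure.addHaar_sphere μ x r)]
    with y hy hyb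
  refine notMem_support.mp fun hys => ?_
  rcases (ball_union_sphere (x := x) (ε := r) ▸ hf hys) with h | h
  exacts [hyb h, hy h]

lemma setOf_lt_exp_mul_sq_sub_one {α : Type*} (u : α → ℝ) {lam t : ℝ} (hlam : 0 < lam)
    (ht : 0 < t) :
    {x | t < Real.exp (lam * u x ^ 2) - 1} = {x | √(Real.log (1 + t) / lam) < |u x|} := by
  ext x
  rw [mem_ofPred_eq, mem_ofPred_eq, lt_sub_iff_add_lt', ← Real.log_lt_iff_lt_exp (by linarith),
    ← Real.sqrt_sq_eq_abs, Real.sqrt_lt_sqrt_iff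
      (div_nonneg (Real.log_nonneg (by linarith)) hlam.le),
    div_lt_iff₀ hlam, mul_comm]

lemma lintegral_Ioi_one_add_rpow_neg_le {a q : ℝ} (ha : 0 ≤ a) (hq : 1 < q) :
    ∫⁻ t in Ioi a, ENNReal.ofReal ((1 + t) ^ (-q)) ≤ ENNReal.ofReal (1 / (q - 1)) := by
  have hpre : (fun t : ℝ => 1 + t) ⁻¹' Ioi (1 + a) = Ioi a := by
    ext t
    simp
  have hint : IntegrableOn (fun y : ℝ => y ^ (-q)) (Ioi (1 + a)) :=
    integrableOn_Ioi_rpow_of_lt (by linarith) (by linarith)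
  have hnn : 0 ≤ᵐ[volume.restrict (Ioi (1 + a))] fun y : ℝ => y ^ (-q) :=
    (ae_restrict_iff' measurableSet_Ioi).mpr
      (Eventually.of_forall fun y (hy : 1 + a < y) => Real.rpow_nonneg (by linarith) _)
  calc ∫⁻ t in Ioi a, ENNReal.ofReal ((1 + t) ^ (-q))
      = ∫⁻ y in Ioi (1 + a), ENNReal.ofReal (y ^ (-q)) := by
        rw [← hpre]
        exact (measurePreserving_add_left volume 1).setLIntegral_comp_preimage_emb
          (measurableEmbedding_addLeft 1) (fun y => ENNReal.ofReal (y ^ (-q))) _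
    _ = ENNReal.ofReal ((1 + a) ^ (1 - q) / (q - 1)) := by
        rw [← ofReal_integral_eq_lintegral_ofReal hint hnn,
          integral_Ioi_rpow_of_lt (by linarith) (by linarith)]
        congr 1
        rw [show -q + 1 = -(q - 1) by ring, div_neg, neg_div, neg_neg, neg_sub]
    _ ≤ ENNReal.ofReal (1 / (q - 1)) := by
        gcongr
        exact Real.rpow_le_one_of_one_le_of_nonpos (by linarith) (by linarith)

lemma exp_mul_sq_sub_one_nonneg {lam : ℝ} (hlam : 0 ≤ lam) (x : ℝ) :
    0 ≤ Real.exp (lam * x ^ 2) - 1 :=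
  sub_nonneg.mpr (Real.one_le_exp (by positivity))

lemma support_exp_mul_sq_sub_one_subset {α : Type*} {lam : ℝ} (u : α → ℝ) :
    support (fun x => Real.exp (lam * u x ^ 2) - 1) ⊆ support u :=
  fun x hx hux => hx (by simp [hux])

noncomputable def moserBound (lam ε : ℝ) : ℝ :=
  Real.pi * (Real.exp (lam * ε ^ 2) - 1)
    + Real.pi * Real.exp 2 * (lam * ε ^ 2) / (2 - lam * ε ^ 2)

lemma moserBound_nonneg {lam ε : ℝ} (hlam : 0 ≤ lam) (hlamε : lam * ε ^ 2 < 2) :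
    0 ≤ moserBound lam ε := by
  have := exp_mul_sq_sub_one_nonneg hlam ε
  have : 0 < 2 - lam * ε ^ 2 := by linarith
  unfold moserBound
  positivity

lemma tendsto_moserBound_nhds_zero (lam : ℝ) : Tendsto (moserBound lam) (𝓝 0) (𝓝 0) := by
  have : ContinuousAt (moserBound lam) 0 := by
    unfold moserBound
    fun_prop (disch := norm_num)
  simpa [moserBound] using this.tendsto

noncomputable def expL2Quasinorm (u : E2 → ℝ) : ℝ :=
  ⨆ r : Ioo (0 : ℝ) 1, rearr u r / √(1 + Real.log (1 / (r : ℝ)))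

lemma expL2Quasinorm_nonneg (u : E2 → ℝ) : 0 ≤ expL2Quasinorm u :=
  Real.iSup_nonneg fun _ => div_nonneg (rearr_nonneg _ _) (Real.sqrt_nonneg _)

section MoserIntegral

variable {u : E2 → ℝ} {lam ε : ℝ}

lemma volume_lt_exp_mul_sq_sub_one_le (hm : Measurable u) (hu : volume (support u) ≠ ∞)
    (hlam : 0 < lam) (hε : 0 < ε)
    (hb : ∀ r ∈ Ioo (0 : ℝ) 1, rearr u r ≤ ε * √(1 + Real.log (1 / r)))
    {t : ℝ} (ht : Real.exp (lam * ε ^ 2) - 1 < t) :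
    volume {x | t < Real.exp (lam * u x ^ 2) - 1}
      ≤ ENNReal.ofReal (Real.pi * Real.exp 2 * (1 + t) ^ (-(2 / (lam * ε ^ 2)))) := by
  have ht0 : 0 < t := (exp_mul_sq_sub_one_nonneg hlam.le ε).trans_lt ht
  have hlog : lam * ε ^ 2 < Real.log (1 + t) := by
    rw [Real.lt_log_iff_exp_lt (by linarith)]
    linarith
  set s := √(Real.log (1 + t) / lam)
  have hs2 : s ^ 2 = Real.log (1 + t) / lam :=
    Real.sq_sqrt (div_nonneg (Real.log_nonneg (by linarith)) hlam.le)
  have hεs : ε < s := by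
    rw [← Real.sqrt_sq hε.le]
    exact Real.sqrt_lt_sqrt (sq_nonneg ε) ((lt_div_iff₀ hlam).mpr (by linarith))
  rw [setOf_lt_exp_mul_sq_sub_one u hlam ht0]
  refine (volume_lt_abs_le_of_rearr_le_mul_sqrt_log hm hu hε hb hεs).trans_eq ?_
  rw [Real.rpow_def_of_pos (by linarith), mul_assoc, ← Real.exp_add, hs2]
  congr 3
  field_simp
  ring

lemma volume_lt_exp_mul_sq_sub_one_le_pi (hu : support u ⊆ closedBall 0 1) {t : ℝ}
    (ht : 0 ≤ t) : volume {x | t < Real.exp (lam * u x ^ 2) - 1} ≤ ENNReal.ofReal Real.pi :=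
  calc volume {x | t < Real.exp (lam * u x ^ 2) - 1} ≤ volume (closedBall (0 : E2) 1) :=
        measure_mono fun x hx => hu fun hux => by simp [hux] at hx; linarith
    _ = ENNReal.ofReal Real.pi := by simp

lemma lintegral_exp_mul_sq_sub_one_le (hm : Measurable u) (hu : support u ⊆ closedBall 0 1)
    (hlam : 0 < lam) (hε : 0 < ε) (hlamε : lam * ε ^ 2 < 2)
    (hb : ∀ r ∈ Ioo (0 : ℝ) 1, rearr u r ≤ ε * √(1 + Real.log (1 / r))) :
    ∫⁻ x, ENNReal.ofReal (Real.exp (lam * u x ^ 2) - 1)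
      ≤ ENNReal.ofReal (moserBound lam ε) := by
  set t₀ := Real.exp (lam * ε ^ 2) - 1
  set q := 2 / (lam * ε ^ 2)
  have ht₀ : 0 ≤ t₀ := exp_mul_sq_sub_one_nonneg hlam.le ε
  have hq : 1 < q := (one_lt_div (by positivity)).mpr hlamε
  have htail : Real.pi * Real.exp 2 * (lam * ε ^ 2) / (2 - lam * ε ^ 2)
      = Real.pi * Real.exp 2 * (1 / (q - 1)) := by
    simp only [q]
    field_simp
  rw [lintegral_eq_lintegral_meas_lt _ (Eventually.of_forall fun x => exp_mul_sq_sub_one_nonneg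
      hlam.le (u x)) (by fun_prop), ← Ioc_union_Ioi_eq_Ioi ht₀,
    lintegral_union measurableSet_Ioi (Ioc_disjoint_Ioi le_rfl), moserBound, htail,
    ENNReal.ofReal_add (by positivity) (by positivity)]
  gcongr
  · calc ∫⁻ t in Ioc 0 t₀, volume {x | t < Real.exp (lam * u x ^ 2) - 1}
        ≤ ∫⁻ _ in Ioc 0 t₀, ENNReal.ofReal Real.pi :=
          setLIntegral_mono measurable_const fun t ht =>
            volume_lt_exp_mul_sq_sub_one_le_pi hu ht.1.le
      _ = ENNReal.ofReal (Real.pi * t₀) := by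
          rw [setLIntegral_const, Real.volume_Ioc, sub_zero, ← ENNReal.ofReal_mul Real.pi_nonneg]
  · have hfin : volume (support u) ≠ ∞ :=
      measure_ne_top_of_subset hu measure_closedBall_lt_top.ne
    calc ∫⁻ t in Ioi t₀, volume {x | t < Real.exp (lam * u x ^ 2) - 1}
        ≤ ∫⁻ t in Ioi t₀,
            ENNReal.ofReal (Real.pi * Real.exp 2) * ENNReal.ofReal ((1 + t) ^ (-q)) :=
          setLIntegral_mono (by fun_prop) fun t ht => by
            rw [← ENNReal.ofReal_mul (by positivity)]
            exact volume_lt_exp_mul_sq_sub_one_le hm hfin hlam hε hb ht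
      _ ≤ ENNReal.ofReal (Real.pi * Real.exp 2 * (1 / (q - 1))) := by
          rw [lintegral_const_mul _ (by fun_prop)]
          exact (mul_le_mul_right (lintegral_Ioi_one_add_rpow_neg_le ht₀ hq) _).trans_eq
            (ENNReal.ofReal_mul (by positivity)).symm

lemma integral_exp_mul_sq_sub_one_le (hm : Measurable u) (hu : support u ⊆ closedBall 0 1)
    (hlam : 0 < lam) (hε : 0 < ε) (hlamε : lam * ε ^ 2 < 2)
    (hb : ∀ r ∈ Ioo (0 : ℝ) 1, rearr u r ≤ ε * √(1 + Real.log (1 / r))) :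
    ∫ x, (Real.exp (lam * u x ^ 2) - 1) ≤ moserBound lam ε := by
  rw [integral_eq_lintegral_of_nonneg_ae
    (Eventually.of_forall fun x => exp_mul_sq_sub_one_nonneg hlam.le (u x)) (by fun_prop)]
  exact ENNReal.toReal_le_of_le_ofReal (moserBound_nonneg hlam.le hlamε)
    (lintegral_exp_mul_sq_sub_one_le hm hu hlam hε hlamε hb)

lemma mul_pi_mul_sq_le_integral_of_lt_rearr (hm : Measurable u)
    (hu : volume (support u) ≠ ∞) (hlam : 0 ≤ lam)
    (hi : Integrable fun x => Real.exp (lam * u x ^ 2) - 1) {s r : ℝ} (hs : 0 ≤ s)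
    (h : s < rearr u r) :
    (Real.exp (lam * s ^ 2) - 1) * (Real.pi * r ^ 2) ≤ ∫ x, (Real.exp (lam * u x ^ 2) - 1) := by
  calc (Real.exp (lam * s ^ 2) - 1) * (Real.pi * r ^ 2)
      ≤ (Real.exp (lam * s ^ 2) - 1) * volume.real {x | s < |u x|} :=
        mul_le_mul_of_nonneg_left (pi_mul_sq_lt_measureReal_of_lt_rearr hs h).le
          (exp_mul_sq_sub_one_nonneg hlam s)
    _ ≤ ∫ x in {x | s < |u x|}, (Real.exp (lam * u x ^ 2) - 1) := by
        refine setIntegral_ge_of_const_le_real (measurableSet_lt measurable_const hm.abs)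
          (measure_lt_abs_ne_top hu hs) (fun x (hx : s < |u x|) => ?_) hi.integrableOn
        have hsq : s ^ 2 ≤ u x ^ 2 := (pow_le_pow_left₀ hs hx.le 2).trans_eq (sq_abs _)
        gcongr
    _ ≤ ∫ x, (Real.exp (lam * u x ^ 2) - 1) :=
        setIntegral_le_integral hi
          (Eventually.of_forall fun x => exp_mul_sq_sub_one_nonneg hlam (u x))

lemma bddAbove_rearr_div_of_integrable (hm : Measurable u)
    (hu : volume (support u) ≠ ∞) (hlam : 0 < lam)
    (hi : Integrable fun x => Real.exp (lam * u x ^ 2) - 1) :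
    BddAbove (range fun r : Ioo (0 : ℝ) 1 => rearr u r / √(1 + Real.log (1 / (r : ℝ)))) := by
  set I := ∫ x, (Real.exp (lam * u x ^ 2) - 1)
  have hI : 0 ≤ I := integral_nonneg fun x => exp_mul_sq_sub_one_nonneg hlam.le (u x)
  -- above it, Markov's inequality at level `√((2 + I)/lam) √(1 + log (1/r))` gives `π (2 + I) ≤ I`
  refine ⟨√((2 + I) / lam), forall_mem_range.mpr fun ⟨r, hr0, hr1⟩ => ?_⟩
  dsimp only
  set L := Real.log (1 / r)
  have hL : 0 ≤ L := Real.log_nonneg (one_le_one_div hr0 hr1.le)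
  have hexpL : Real.exp L * r = 1 := by
    rw [Real.exp_log (by positivity), one_div_mul_cancel hr0.ne']
  rw [div_le_iff₀ (Real.sqrt_pos.mpr (by linarith))]
  by_contra! h
  have hmarkov := mul_pi_mul_sq_le_integral_of_lt_rearr hm hu hlam.le hi (by positivity) h
  rw [mul_pow, Real.sq_sqrt (by positivity), Real.sq_sqrt (by linarith),
    show lam * ((2 + I) / lam * (1 + L)) = (2 + I) * (1 + L) by field_simp] at hmarkov
  have hgrowth : 3 + I ≤ Real.exp ((2 + I) * (1 + L)) * r ^ 2 := by
    calc 3 + I ≤ Real.exp (2 + I) := by linarith [Real.add_one_le_exp (2 + I)]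
      _ = Real.exp (2 + I) * (Real.exp L * r) ^ 2 := by rw [hexpL]; ring
      _ ≤ Real.exp ((2 + I) * (1 + L)) * r ^ 2 := by
          rw [mul_pow, ← mul_assoc, ← Real.exp_nat_mul, ← Real.exp_add]
          gcongr
          push_cast
          nlinarith
  change _ ≤ I at hmarkov
  nlinarith [Real.pi_gt_three, mul_le_mul_of_nonneg_left hgrowth Real.pi_pos.le,
    mul_lt_mul_of_pos_left (pow_lt_one₀ hr0.le hr1 two_ne_zero) Real.pi_pos]

lemma integral_exp_mul_sq_sub_one_le_of_expL2Quasinorm_le (hm : Measurable u)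
    (hu : support u ⊆ closedBall 0 1) (hlam : 0 < lam) (hε : 0 < ε) (hlamε : lam * ε ^ 2 < 2)
    (hle : expL2Quasinorm u ≤ ε) :
    ∫ x, (Real.exp (lam * u x ^ 2) - 1) ≤ moserBound lam ε := by
  have hfin : volume (support u) ≠ ∞ := measure_ne_top_of_subset hu measure_closedBall_lt_top.ne
  -- `⨆` of an unbounded family is `0`, so the supremum is only usable once the integrand is
  -- integrable; otherwise the Bochner integral is `0`.
  by_cases hi : Integrable fun x => Real.exp (lam * u x ^ 2) - 1
  · refine integral_exp_mul_sq_sub_one_le hm hu hlam hε hlamε fun r hr => ?_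
    have hL : 0 ≤ Real.log (1 / r) := Real.log_nonneg (one_le_one_div hr.1 hr.2.le)
    rw [← div_le_iff₀ (Real.sqrt_pos.mpr (by linarith))]
    exact (le_ciSup (bddAbove_rearr_div_of_integrable hm hfin hlam hi) ⟨r, hr⟩).trans hle
  · rw [integral_undef hi]
    exact moserBound_nonneg hlam.le hlamε

end MoserIntegral

theorem expL2_convergence_implies_moser_convergence_general
    (u : ℕ → E2 → ℝ)
    (hmeas : ∀ k, Measurable (u k))
    (hsupp : ∀ k, tsupport (u k) ⊆ closedBall (0 : E2) 1)
    (hexp : Tendsto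
      (fun k => ⨆ r : Set.Ioo (0:ℝ) 1, rearr (u k) r / Real.sqrt (1 + Real.log (1/(r:ℝ))))
      atTop (nhds 0)) :
    ∀ lam > (0:ℝ),
      Tendsto (fun k => ∫ x in ball (0 : E2) 1, (Real.exp (lam * (u k x) ^ 2) - 1))
        atTop (nhds 0) := by
  intro lam hlam
  set ε : ℕ → ℝ := fun k => expL2Quasinorm (u k) + 1 / (k + 1)
  have hε : Tendsto ε atTop (𝓝 0) := by
    have := (hexp : Tendsto (fun k => expL2Quasinorm (u k)) atTop (𝓝 0)).add
      tendsto_one_div_add_atTop_nhds_zero_nat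
    rwa [add_zero] at this
  have hsmall : ∀ᶠ k in atTop, lam * ε k ^ 2 < 2 := by
    have hcont : Continuous fun ε : ℝ => lam * ε ^ 2 := by fun_prop
    exact ((hcont.tendsto 0).comp hε).eventually_lt_const (by simp)
  refine squeeze_zero' (Eventually.of_forall fun k => setIntegral_nonneg measurableSet_ball
    fun x _ => exp_mul_sq_sub_one_nonneg hlam.le (u k x)) ?_
    ((tendsto_moserBound_nhds_zero lam).comp hε)
  filter_upwards [hsmall] with k hk
  have hsuppk : support (u k) ⊆ closedBall 0 1 := (subset_tsupport _).trans (hsupp k)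
  rw [setIntegral_ball_eq_integral volume ((support_exp_mul_sq_sub_one_subset _).trans hsuppk)]
  exact integral_exp_mul_sq_sub_one_le_of_expL2Quasinorm_le (hmeas k) hsuppk hlam
    (add_pos_of_nonneg_of_pos (expL2Quasinorm_nonneg _) Nat.one_div_pos_of_nat) hk
    (le_add_of_nonneg_right Nat.one_div_pos_of_nat.le)

/-- If `u_k` is bounded in `H^1_0(B)` (`B` the unit disk, `‖∇u_k‖₂ ≤ 1`, radial) and
`sup_{r∈(0,1)} u_k^*(r)/(1 + log(1/r))^{1/2} → 0` (i.e. `u_k → 0` in `exp L²`), then for every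
`λ > 0`, `∫_B (e^{λ u_k²} − 1) dx → 0`. -/
theorem expL2_convergence_implies_moser_convergence
    (u : ℕ → E2 → ℝ)
    (hmeas : ∀ k, Measurable (u k))
    (hsupp : ∀ k, tsupport (u k) ⊆ closedBall (0 : E2) 1)
    (hrad : ∀ k, ∀ x y : E2, ‖x‖ = ‖y‖ → u k x = u k y)
    (henergy : ∀ k, ∫ x in ball (0 : E2) 1, ‖fderiv ℝ (u k) x‖ ^ 2 ≤ 1)
    (hexp : Tendsto
      (fun k => ⨆ r : Set.Ioo (0:ℝ) 1, rearr (u k) r / Real.sqrt (1 + Real.log (1/(r:ℝ))))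
      atTop (nhds 0)) :
    ∀ lam > (0:ℝ),
      Tendsto (fun k => ∫ x in ball (0 : E2) 1, (Real.exp (lam * (u k x) ^ 2) - 1))
        atTop (nhds 0) :=
  expL2_convergence_implies_moser_convergence_general u hmeas hsupp hexp
end

section
/- If h : [0,∞) → [0,∞) is continuous, non-decreasing and unbounded, then sup { ∫_B h(|u|) e^{4π u^2} dx : u ∈ H^1_0(B), ‖∇u‖_2 ≤ 1 } = +∞, where B is the unit disk in R^2. In particular the supremum over the Moser family m_t, t → 0, is infinite. -/
/-!
The Moser function of height `a` equals `a` on the disk of radius `t = exp (-2π a²)`, is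
`log (1/|x|) / (2π a)` on the annulus `t < |x| < 1` and vanishes outside the unit disk. Its
Dirichlet energy is `∫_{t<|x|<1} (2π a |x|)⁻² dx = log (1/t) / (2π a²) = 1`, while on the small
disk the integrand is `h a · e^{4π a²}`, so the integral is at least `π t² h(a) e^{4π a²} = π h(a)`.
Since `h` is unbounded, `a` can be chosen with `π h(a)` as large as we like.
-/

open MeasureTheory Metric Set

open Real

noncomputable section

def moserRadius (a : ℝ) : ℝ := Real.exp (-(2 * π * a ^ 2))

/-- Since `log (1 / moserRadius a) = 2π a²`, this is the paper's `m_t` for `t = moserRadius a`,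
parametrised by its height `a = m_t 0`. -/
def moserFun {E : Type*} [NormedAddCommGroup E] (a : ℝ) (x : E) : ℝ :=
  -Real.log (max (min ‖x‖ 1) (moserRadius a)) / (2 * π * a)

end

lemma moserRadius_pos (a : ℝ) : 0 < moserRadius a := exp_pos _

lemma moserRadius_le_one (a : ℝ) : moserRadius a ≤ 1 :=
  exp_le_one_iff.2 (neg_nonpos.2 (by positivity))

lemma log_moserRadius (a : ℝ) : Real.log (moserRadius a) = -(2 * π * a ^ 2) := log_exp _

lemma moserRadius_sq_mul_exp (a : ℝ) : moserRadius a ^ 2 * Real.exp (4 * π * a ^ 2) = 1 := by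
  rw [moserRadius, ← exp_nat_mul, ← exp_add, ← exp_zero]
  ring_nf

lemma exists_pos_lt_of_not_bddAbove_image_Ici {h : ℝ → ℝ} (hh : ¬BddAbove (h '' Ici 0))
    (M : ℝ) : ∃ a > 0, M < h a := by
  obtain ⟨_, ⟨a, ha, rfl⟩, hlt⟩ := not_bddAbove_iff.1 hh (max M (h 0))
  refine ⟨a, lt_of_le_of_ne ha ?_, (le_max_left _ _).trans_lt hlt⟩
  rintro rfl
  exact (le_max_right M _).not_gt hlt

section NormedSpace

variable {E : Type*} [NormedAddCommGroup E] {a : ℝ}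

lemma moserFun_eq_zero_of_one_le_norm {x : E} (hx : 1 ≤ ‖x‖) : moserFun a x = 0 := by
  rw [moserFun, min_eq_right hx, max_eq_left (moserRadius_le_one a), log_one, neg_zero, zero_div]

lemma tsupport_moserFun_subset (a : ℝ) : tsupport (moserFun a : E → ℝ) ⊆ closedBall 0 1 :=
  closure_minimal (fun x hx => by
    by_contra hx1
    exact hx (moserFun_eq_zero_of_one_le_norm (not_le.1 (by simpa using hx1)).le))
    isClosed_closedBall

lemma moserFun_eq_of_norm_le {x : E} (hx : ‖x‖ ≤ moserRadius a) : moserFun a x = a := by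
  rw [moserFun, max_eq_right ((min_le_left _ _).trans hx), log_moserRadius]
  rcases eq_or_ne a 0 with rfl | ha
  · simp
  · field_simp

lemma continuous_moserFun (a : ℝ) : Continuous (moserFun a : E → ℝ) := by
  refine ((Continuous.log (by fun_prop) fun x => ?_).neg).div_const _
  exact ((moserRadius_pos a).trans_le (le_max_right _ _)).ne'

lemma exists_lipschitzWith_moserFun (a : ℝ) : ∃ K, LipschitzWith K (moserFun a : E → ℝ) := by
  set t := moserRadius a
  have ht0 : 0 < t := moserRadius_pos a
  have hlog : LipschitzOnWith ‖(t * (2 * π * a))⁻¹‖₊ (fun s => -Real.log s / (2 * π * a))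
      (Icc t 1) := by
    refine (convex_Icc t 1).lipschitzOnWith_of_nnnorm_hasDerivWithin_le
      (f' := fun s => -s⁻¹ / (2 * π * a)) (fun s hs => ?_) (fun s hs => ?_)
    all_goals have hs0 : 0 < s := ht0.trans_le hs.1
    · exact ((hasDerivAt_log hs0.ne').neg.div_const _).hasDerivWithinAt
    · rw [← NNReal.coe_le_coe, coe_nnnorm, coe_nnnorm]
      calc ‖-s⁻¹ / (2 * π * a)‖ = s⁻¹ * ‖2 * π * a‖⁻¹ := by
            rw [norm_div, norm_neg, norm_inv, norm_of_nonneg hs0.le, div_eq_mul_inv]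
        _ ≤ t⁻¹ * ‖2 * π * a‖⁻¹ := by gcongr; exact hs.1
        _ = ‖(t * (2 * π * a))⁻¹‖ := by
            rw [norm_inv, norm_mul t, norm_of_nonneg ht0.le, mul_inv]
  have hclamp : LipschitzWith 1 (fun r : ℝ => max (min r 1) t) :=
    (LipschitzWith.id.min_const 1).max_const t
  have hmaps : MapsTo (fun r : ℝ => max (min r 1) t) univ (Icc t 1) :=
    fun r _ => ⟨le_max_right _ _, max_le (min_le_right _ _) (moserRadius_le_one a)⟩
  exact ⟨_, (lipschitzOnWith_univ.1 (hlog.comp hclamp.lipschitzOnWith hmaps)).comp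
    lipschitzWith_one_norm⟩

end NormedSpace

section InnerProductSpace

variable {E : Type*} [NormedAddCommGroup E] [InnerProductSpace ℝ E] {a : ℝ}

lemma norm_fderiv_comp_norm_le {f : ℝ → ℝ} {f' : ℝ} {x : E} (hx : x ≠ 0)
    (hf : HasDerivAt f f' ‖x‖) : ‖fderiv ℝ (fun y => f ‖y‖) x‖ ≤ |f'| := by
  have hnorm := ((contDiffAt_norm ℝ hx).differentiableAt one_ne_zero).hasFDerivAt
  rw [show (fun y : E => f ‖y‖) = f ∘ norm from rfl, (hf.comp_hasFDerivAt x hnorm).fderiv,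
    norm_smul, norm_eq_abs]
  exact mul_le_of_le_one_right (abs_nonneg _)
    (NNReal.coe_one ▸ norm_fderiv_le_of_lipschitz ℝ lipschitzWith_one_norm)

lemma sq_norm_fderiv_moserFun_le {x : E} (hxt : ‖x‖ ≠ moserRadius a) (hx1 : ‖x‖ < 1) :
    ‖fderiv ℝ (moserFun a) x‖ ^ 2
      ≤ ((2 * π * a) ^ 2)⁻¹ * (Ioo (moserRadius a) 1).indicator (fun r => (r ^ 2)⁻¹) ‖x‖ := by
  set t := moserRadius a
  rcases hxt.lt_or_gt with hxt | hxt
  · have hconst : moserFun a =ᶠ[nhds x] fun _ => a :=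
      Filter.mem_of_superset ((isOpen_lt continuous_norm continuous_const).mem_nhds hxt)
        fun y hy => moserFun_eq_of_norm_le (le_of_lt hy)
    rw [hconst.fderiv_eq, fderiv_const_apply, norm_zero, sq, zero_mul]
    exact mul_nonneg (by positivity) (indicator_nonneg (fun _ _ => by positivity) _)
  · have hx0 : 0 < ‖x‖ := (moserRadius_pos a).trans hxt
    have hannulus : moserFun a =ᶠ[nhds x] fun y => -Real.log ‖y‖ / (2 * π * a) := by
      refine Filter.mem_of_superset (((isOpen_lt continuous_const continuous_norm).inter
        (isOpen_lt continuous_norm continuous_const)).mem_nhds ⟨hxt, hx1⟩) fun y hy => ?_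
      change moserFun a y = _
      rw [moserFun, min_eq_left hy.2.le, max_eq_left hy.1.le]
    have hderiv := norm_fderiv_comp_norm_le (norm_pos_iff.1 hx0)
      ((hasDerivAt_log hx0.ne').neg.div_const (2 * π * a))
    rw [hannulus.fderiv_eq, indicator_of_mem (show ‖x‖ ∈ Ioo t 1 from ⟨hxt, hx1⟩)]
    calc ‖fderiv ℝ (fun y => -Real.log ‖y‖ / (2 * π * a)) x‖ ^ 2
        ≤ |-‖x‖⁻¹ / (2 * π * a)| ^ 2 := pow_le_pow_left₀ (norm_nonneg _) hderiv 2
      _ = ((2 * π * a) ^ 2)⁻¹ * (‖x‖ ^ 2)⁻¹ := by rw [sq_abs]; ring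

end InnerProductSpace

section Plane

variable {s R : ℝ}

lemma mul_indicator_Ioo_inv_sq (hs : 0 ≤ s) (y : ℝ) :
    y * (Ioo s R).indicator (fun r => (r ^ 2)⁻¹) y = (Ioo s R).indicator (fun r => r⁻¹) y := by
  by_cases hy : y ∈ Ioo s R
  · have hy0 : y ≠ 0 := (hs.trans_lt hy.1).ne'
    rw [indicator_of_mem hy, indicator_of_mem hy]
    field_simp
  · rw [indicator_of_notMem hy, indicator_of_notMem hy, mul_zero]

lemma integrable_indicator_Ioo_inv_sq_norm (hs : 0 < s) :
    Integrable (fun x : E2 => (Ioo s R).indicator (fun r => (r ^ 2)⁻¹) ‖x‖) := by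
  rw [integrable_fun_norm_addHaar volume (f := (Ioo s R).indicator fun r => (r ^ 2)⁻¹),
    finrank_euclideanSpace_fin]
  simp only [Nat.add_one_sub_one, pow_one, smul_eq_mul, mul_indicator_Ioo_inv_sq hs.le]
  have hinv : IntegrableOn (fun r : ℝ => r⁻¹) (Icc s R) :=
    (continuousOn_inv₀.mono fun r hr => (hs.trans_le hr.1).ne').integrableOn_compact isCompact_Icc
  exact ((hinv.mono_set Ioo_subset_Icc_self).integrable_indicator measurableSet_Ioo).integrableOn

lemma integral_indicator_Ioo_inv_sq_norm (hs : 0 < s) (hsR : s ≤ R) :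
    ∫ x : E2, (Ioo s R).indicator (fun r => (r ^ 2)⁻¹) ‖x‖ = 2 * π * Real.log (R / s) := by
  rw [integral_fun_norm_addHaar volume, finrank_euclideanSpace_fin]
  simp only [Nat.add_one_sub_one, pow_one, smul_eq_mul, mul_indicator_Ioo_inv_sq hs.le]
  rw [setIntegral_indicator measurableSet_Ioo,
    inter_eq_self_of_subset_right (show Ioo s R ⊆ Ioi 0 from fun r hr => hs.trans hr.1),
    ← integral_Ioc_eq_integral_Ioo, ← intervalIntegral.integral_of_le hsR,
    integral_inv_of_pos hs (hs.trans_le hsR)]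
  simp only [measureReal_def, EuclideanSpace.volume_ball_fin_two, ENNReal.ofReal_one, one_pow,
    one_mul, ENNReal.toReal_ofReal pi_nonneg, nsmul_eq_mul, Nat.cast_ofNat]
  ring

end Plane

lemma setIntegral_ball_sq_norm_fderiv_moserFun_le {a : ℝ} (ha : a ≠ 0) :
    ∫ x in ball (0 : E2) 1, ‖fderiv ℝ (moserFun a) x‖ ^ 2 ≤ 1 := by
  set t := moserRadius a
  set g : E2 → ℝ := fun x => ((2 * π * a) ^ 2)⁻¹ * (Ioo t 1).indicator (fun r => (r ^ 2)⁻¹) ‖x‖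
  have hg : Integrable g :=
    (integrable_indicator_Ioo_inv_sq_norm (moserRadius_pos a)).const_mul _
  have hg0 : 0 ≤ g := fun x =>
    mul_nonneg (by positivity) (indicator_nonneg (fun _ _ => by positivity) _)
  -- the kink of `moserFun a` lies on the null set `sphere 0 t`
  have hbound : ∀ᵐ x ∂volume.restrict (ball (0 : E2) 1), ‖fderiv ℝ (moserFun a) x‖ ^ 2 ≤ g x := by
    rw [ae_restrict_iff' measurableSet_ball]
    filter_upwards [measure_eq_zero_iff_ae_notMem.1 (Measure.addHaar_sphere volume 0 t)]
      with x hxt hx1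
    exact sq_norm_fderiv_moserFun_le (by simpa using hxt) (by simpa using hx1)
  calc ∫ x in ball (0 : E2) 1, ‖fderiv ℝ (moserFun a) x‖ ^ 2
      ≤ ∫ x in ball (0 : E2) 1, g x :=
        integral_mono_of_nonneg (.of_forall fun _ => by positivity) hg.integrableOn hbound
    _ ≤ ∫ x, g x := setIntegral_le_integral hg (.of_forall hg0)
    _ = ((2 * π * a) ^ 2)⁻¹ * (2 * π * Real.log (1 / t)) := by
        rw [integral_const_mul,
          integral_indicator_Ioo_inv_sq_norm (moserRadius_pos a) (moserRadius_le_one a)]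
    _ = 1 := by
        rw [one_div, log_inv, log_moserRadius]
        field_simp

lemma mul_le_setIntegral_ball_comp_moserFun {F : ℝ → ℝ} (hF : Continuous F) (hF0 : ∀ s, 0 ≤ F s)
    (a : ℝ) : π * moserRadius a ^ 2 * F a ≤ ∫ x in ball (0 : E2) 1, F (moserFun a x) := by
  have hint : IntegrableOn (fun x => F (moserFun a x)) (ball (0 : E2) 1) :=
    ((hF.comp (continuous_moserFun a)).continuousOn.integrableOn_compact
      (isCompact_closedBall 0 1)).mono_set ball_subset_closedBall
  calc π * moserRadius a ^ 2 * F a = ∫ x in ball (0 : E2) (moserRadius a), F (moserFun a x) := by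
        rw [setIntegral_congr_fun measurableSet_ball fun x hx => by
          rw [moserFun_eq_of_norm_le (mem_ball_zero_iff.1 hx).le], setIntegral_const]
        simp [measureReal_def, (moserRadius_pos a).le, pi_nonneg, mul_comm]
    _ ≤ ∫ x in ball (0 : E2) 1, F (moserFun a x) :=
        setIntegral_mono_set hint (.of_forall fun x => hF0 _)
          (ball_subset_ball (moserRadius_le_one a)).eventuallyLE

theorem moser_sharpness_general (h : ℝ → ℝ)
    (hc : ContinuousOn h (Set.Ici 0))
    (hnonneg : ∀ s ∈ Set.Ici (0:ℝ), 0 ≤ h s)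
    (hunbdd : ¬ BddAbove (h '' Set.Ici 0)) :
    ∀ M : ℝ, ∃ u : E2 → ℝ,
      (∃ L, LipschitzWith L u) ∧
      tsupport u ⊆ closedBall (0 : E2) 1 ∧
      (∫ x in ball (0 : E2) 1, ‖fderiv ℝ u x‖ ^ 2) ≤ 1 ∧
      M ≤ ∫ x in ball (0 : E2) 1, h |u x| * Real.exp (4 * Real.pi * (u x) ^ 2) := by
  intro M
  obtain ⟨a, ha, hMa⟩ := exists_pos_lt_of_not_bddAbove_image_Ici hunbdd (M / π)
  have hF : Continuous fun s => h |s| * Real.exp (4 * π * s ^ 2) :=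
    (hc.comp_continuous continuous_abs abs_nonneg).mul (by fun_prop)
  have hF0 (s : ℝ) : 0 ≤ h |s| * Real.exp (4 * π * s ^ 2) :=
    mul_nonneg (hnonneg _ (abs_nonneg s)) (exp_pos _).le
  refine ⟨moserFun a, exists_lipschitzWith_moserFun a, tsupport_moserFun_subset a,
    setIntegral_ball_sq_norm_fderiv_moserFun_le ha.ne', ?_⟩
  calc M ≤ π * h a := ((div_lt_iff₀' pi_pos).1 hMa).le
    _ = π * moserRadius a ^ 2 * (h |a| * Real.exp (4 * π * a ^ 2)) := by
        rw [abs_of_pos ha, mul_mul_mul_comm, moserRadius_sq_mul_exp, mul_one]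
    _ ≤ _ := mul_le_setIntegral_ball_comp_moserFun hF hF0 a

/-- Sharpness of the Trudinger–Moser nonlinearity: if `h : [0,∞) → [0,∞)` is continuous,
non-decreasing and unbounded, then
`sup { ∫_B h(|u|) e^{4π u²} dx : u ∈ H^1_0(B), ‖∇u‖₂ ≤ 1 } = +∞`,
`B` the unit disk in `ℝ²` (here `H^1_0(B)` members are represented by Lipschitz functions
supported in the closed disk, a class containing the Moser functions). -/
theorem moser_sharpness (h : ℝ → ℝ)
    (hc : ContinuousOn h (Set.Ici 0))
    (hmono : MonotoneOn h (Set.Ici 0))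
    (hnonneg : ∀ s ∈ Set.Ici (0:ℝ), 0 ≤ h s)
    (hunbdd : ¬ BddAbove (h '' Set.Ici 0)) :
    ∀ M : ℝ, ∃ u : E2 → ℝ,
      (∃ L, LipschitzWith L u) ∧
      tsupport u ⊆ closedBall (0 : E2) 1 ∧
      (∫ x in ball (0 : E2) 1, ‖fderiv ℝ u x‖ ^ 2) ≤ 1 ∧
      M ≤ ∫ x in ball (0 : E2) 1, h |u x| * Real.exp (4 * Real.pi * (u x) ^ 2) :=
  moser_sharpness_general h hc hnonneg hunbdd
end

section
/- For j ∈ ℕ and ζ in the closed unit disk, the operator (g_{j,ζ} u)(z) = j^{-1/2} u(ζ + z^j) (with z^j the j-th complex power) is a linear isometry from H^1_0(Ω) to H^1_0(B) with respect to the gradient L^2 norm, whenever Ω ⊂ B_{1/2} is such that ζ + z^j ranges within the domain of the zero-extended u; i.e., ‖∇(g_{j,ζ}u)‖_{L^2(B)} = ‖∇u‖_{L^2(Ω)}. -/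
open MeasureTheory Metric Set
open scoped Real ENNReal

/-! Since `w ↦ ζ + w ^ j` is holomorphic, the chain rule multiplies the norm of the gradient
by `‖j z ^ (j - 1)‖`, so after the normalisation `j ^ (-1/2)` the squared gradient of `g_{j,ζ} u`
at `z` is `j ‖z‖ ^ (2 (j - 1)) ‖∇u (ζ + z ^ j)‖²`. In polar coordinates `z ↦ z ^ j` acts as
`(r, θ) ↦ (r ^ j, j θ)`: multiplication by `j` preserves Haar measure on the circle and the
substitution `s = r ^ j` turns `j r ^ (2j - 1) dr` into `s ds`, so this weight exactly
compensates the `j`-to-`1` covering. Finally `u` vanishes outside `B_{1/2}` and `‖ζ‖ ≤ 1/2`, so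
the integrand vanishes outside the unit disc. -/

theorem ContinuousLinearMap.norm_comp_toSpanSingleton {F : Type*} [NormedAddCommGroup F]
    [NormedSpace ℝ F] (T : ℂ →L[ℝ] F) (c : ℂ) :
    ‖T.comp ((ContinuousLinearMap.toSpanSingleton ℂ c).restrictScalars ℝ)‖ = ‖T‖ * ‖c‖ := by
  have hpolar : (ContinuousLinearMap.toSpanSingleton ℂ c).restrictScalars ℝ
      = ‖c‖ • ((_root_.rotation (Circle.exp c.arg)).toContinuousLinearEquiv : ℂ →L[ℝ] ℂ) := by
    ext w
    simp only [coe_restrictScalars', toSpanSingleton_apply, smul_eq_mul, smul_apply,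
      ContinuousLinearEquiv.coe_coe, LinearIsometryEquiv.coe_toContinuousLinearEquiv,
      _root_.rotation_apply, Circle.coe_exp, Complex.real_smul]
    rw [← mul_assoc, Complex.norm_mul_exp_arg_mul_I, mul_comm]
  rw [hpolar, ContinuousLinearMap.comp_smul, norm_smul, opNorm_comp_linearIsometryEquiv, norm_norm,
    mul_comm]

theorem norm_fderiv_comp_of_hasDerivAt {F : Type*} [NormedAddCommGroup F] [NormedSpace ℝ F]
    {u : ℂ → F} {φ : ℂ → ℂ} {φ' z : ℂ} (hu : DifferentiableAt ℝ u (φ z))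
    (hφ : HasDerivAt φ φ' z) : ‖fderiv ℝ (u ∘ φ) z‖ = ‖fderiv ℝ u (φ z)‖ * ‖φ'‖ := by
  rw [(hu.hasFDerivAt.comp z (hφ.hasFDerivAt.restrictScalars ℝ)).fderiv,
    ContinuousLinearMap.norm_comp_toSpanSingleton]

theorem sq_norm_fderiv_rescaled_comp_add_pow {j : ℕ} (hj : j ≠ 0) {u : ℂ → ℝ} {ζ z : ℂ}
    (hu : DifferentiableAt ℝ u (ζ + z ^ j)) :
    ‖fderiv ℝ (fun w : ℂ => (j : ℝ) ^ (-(1 : ℝ) / 2) * u (ζ + w ^ j)) z‖ ^ 2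
      = (j * ‖z‖ ^ (2 * (j - 1))) * ‖fderiv ℝ u (ζ + z ^ j)‖ ^ 2 := by
  have hφ : HasDerivAt (fun w : ℂ => ζ + w ^ j) (j * z ^ (j - 1)) z :=
    (hasDerivAt_pow j z).const_add ζ
  have hj0 : (0 : ℝ) < j := by positivity
  have hscale : ((j : ℝ) ^ (-(1 : ℝ) / 2)) ^ 2 = (j : ℝ)⁻¹ := by
    rw [← Real.rpow_mul_natCast hj0.le, ← Real.rpow_neg_one]
    norm_num
  have hcomp : DifferentiableAt ℝ (fun w : ℂ => u (ζ + w ^ j)) z :=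
    hu.comp z (hφ.differentiableAt.restrictScalars ℝ)
  rw [fderiv_const_mul hcomp, norm_smul, ← Function.comp_def u,
    norm_fderiv_comp_of_hasDerivAt (φ := fun w => ζ + w ^ j) hu hφ,
    Real.norm_of_nonneg (by positivity), norm_mul, norm_pow, Complex.norm_natCast, mul_pow, hscale,
    mul_pow, mul_pow, ← pow_mul]
  field_simp
  ring

instance : Fact (0 < 2 * π) := ⟨Real.two_pi_pos⟩

theorem Complex.polarCoord_symm_eq_mul_toCircle (r θ : ℝ) :
    Complex.polarCoord.symm (r, θ) = r * AddCircle.toCircle (θ : AddCircle (2 * π)) := by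
  rw [AddCircle.toCircle_apply_mk, Circle.coe_exp, div_self Real.two_pi_pos.ne', one_mul,
    Complex.exp_mul_I, Complex.polarCoord_symm_apply, Complex.ofReal_cos, Complex.ofReal_sin]

theorem Complex.lintegral_eq_lintegral_Ioi_addCircle {f : ℂ → ℝ≥0∞} (hf : Measurable f) :
    ∫⁻ z, f z = ∫⁻ r in Ioi 0,
      ENNReal.ofReal r * ∫⁻ θ : AddCircle (2 * π), f (r * AddCircle.toCircle θ) := by
  have hmeas : Measurable fun p : ℝ × ℝ => ENNReal.ofReal p.1 • f (Complex.polarCoord.symm p) :=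
    (ENNReal.measurable_ofReal.comp measurable_fst).smul <| hf.comp <|
      Complex.measurableEquivRealProd.symm.measurable.comp continuous_polarCoord_symm.measurable
  rw [← Complex.lintegral_comp_polarCoord_symm, polarCoord_target, Measure.volume_eq_prod,
    ← Measure.prod_restrict, lintegral_prod _ hmeas.aemeasurable]
  refine lintegral_congr fun r => ?_
  simp only [smul_eq_mul]
  rw [lintegral_const_mul' _ _ ENNReal.ofReal_ne_top, setLIntegral_congr Ioo_ae_eq_Ioc,
    ← AddCircle.lintegral_preimage (2 * π) (-π) fun θ => f (r * AddCircle.toCircle θ),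
    show -π + 2 * π = π by ring]
  simp only [Complex.polarCoord_symm_eq_mul_toCircle]

theorem AddCircle.lintegral_comp_nsmul {T : ℝ} [Fact (0 < T)] {n : ℕ} (hn : n ≠ 0)
    {g : AddCircle T → ℝ≥0∞} (hg : Measurable g) : ∫⁻ x, g (n • x) = ∫⁻ x, g x := by
  simpa only [natCast_zsmul] using
    (Measure.measurePreserving_zsmul volume (Int.natCast_ne_zero.mpr hn)).lintegral_comp hg

theorem setLIntegral_Ioi_comp_pow {n : ℕ} (hn : n ≠ 0) (g : ℝ → ℝ≥0∞) :
    ∫⁻ r in Ioi 0, ENNReal.ofReal (n * r ^ (n - 1)) * g (r ^ n) = ∫⁻ s in Ioi 0, g s := by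
  have himage : (· ^ n) '' Ioi (0 : ℝ) = Ioi 0 := by
    refine Subset.antisymm (image_subset_iff.mpr fun r (hr : 0 < r) => pow_pos hr n)
      fun s (hs : 0 < s) => ⟨s ^ (n⁻¹ : ℝ), Real.rpow_pos_of_pos hs _,
        Real.rpow_inv_natCast_pow hs.le hn⟩
  have hinj : InjOn (· ^ n) (Ioi (0 : ℝ)) :=
    ((pow_left_strictMonoOn₀ hn).mono fun _ hr => le_of_lt hr).injOn
  conv_rhs => rw [← himage]
  rw [lintegral_image_eq_lintegral_abs_deriv_mul measurableSet_Ioi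
    (fun r _ => (hasDerivAt_pow n r).hasDerivWithinAt) hinj g]
  refine setLIntegral_congr_fun measurableSet_Ioi fun r (hr : 0 < r) => ?_
  rw [abs_of_nonneg (by positivity)]

theorem Complex.lintegral_comp_pow {n : ℕ} (hn : n ≠ 0) {f : ℂ → ℝ≥0∞} (hf : Measurable f) :
    ∫⁻ z, ENNReal.ofReal (n * ‖z‖ ^ (2 * (n - 1))) * f (z ^ n) = ∫⁻ z, f z := by
  rw [Complex.lintegral_eq_lintegral_Ioi_addCircle (by fun_prop),
    Complex.lintegral_eq_lintegral_Ioi_addCircle hf]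
  conv_rhs => rw [← setLIntegral_Ioi_comp_pow hn]
  refine setLIntegral_congr_fun measurableSet_Ioi fun r (hr : 0 < r) => ?_
  have hpolar : ∀ θ : AddCircle (2 * π), (r * AddCircle.toCircle θ : ℂ) ^ n
      = (r ^ n : ℝ) * AddCircle.toCircle (n • θ) := by
    intro θ
    rw [AddCircle.toCircle_nsmul, mul_pow, Circle.coe_pow, Complex.ofReal_pow]
  have hnorm : ∀ θ : AddCircle (2 * π), ‖(r * AddCircle.toCircle θ : ℂ)‖ = r := by
    intro θ
    rw [norm_mul, Circle.norm_coe, mul_one, Complex.norm_real, Real.norm_of_nonneg hr.le]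
  have hweight : r * (n * r ^ (2 * (n - 1))) = n * r ^ (n - 1) * r ^ n := by
    obtain ⟨m, rfl⟩ := Nat.exists_eq_add_one_of_ne_zero hn
    rw [Nat.add_sub_cancel]
    ring
  simp only [hpolar, hnorm]
  rw [lintegral_const_mul' _ _ ENNReal.ofReal_ne_top,
    AddCircle.lintegral_comp_nsmul hn (g := fun θ => f ((r ^ n : ℝ) * AddCircle.toCircle θ))
      (by fun_prop),
    ← mul_assoc, ← mul_assoc, ← ENNReal.ofReal_mul hr.le, ← ENNReal.ofReal_mul (by positivity),
    hweight]

theorem Complex.map_pow_withDensity_eq_volume {n : ℕ} (hn : n ≠ 0) :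
    (volume.withDensity fun z : ℂ => ENNReal.ofReal (n * ‖z‖ ^ (2 * (n - 1)))).map (· ^ n)
      = volume := by
  ext s hs
  rw [← lintegral_indicator_one hs, ← lintegral_indicator_one hs,
    lintegral_map (measurable_one.indicator hs) (by fun_prop),
    lintegral_withDensity_eq_lintegral_mul _ (by fun_prop)
      (g := fun z => s.indicator 1 (z ^ n)) ((measurable_one.indicator hs).comp (by fun_prop))]
  exact Complex.lintegral_comp_pow hn (measurable_one.indicator hs)

theorem Complex.integral_comp_pow {E : Type*} [NormedAddCommGroup E] [NormedSpace ℝ E] {n : ℕ}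
    (hn : n ≠ 0) {g : ℂ → E} (hg : AEStronglyMeasurable g) :
    ∫ z, (n * ‖z‖ ^ (2 * (n - 1))) • g (z ^ n) = ∫ z, g z := by
  rw [← Complex.map_pow_withDensity_eq_volume hn] at hg
  conv_rhs => rw [← Complex.map_pow_withDensity_eq_volume hn]
  rw [integral_map (by fun_prop) hg, integral_withDensity_eq_integral_toReal_smul (by fun_prop)
    (ae_of_all _ fun _ => ENNReal.ofReal_lt_top)]
  refine integral_congr_ae (ae_of_all _ fun z => ?_)
  dsimp only
  rw [ENNReal.toReal_ofReal (by positivity)]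

/-- The operator `(g_{j,ζ} u)(z) = j^{-1/2} u(ζ + z^j)` (with `z^j` the complex power) is an
isometry from `H^1_0(Ω)` to `H^1_0(B)` for the gradient `L²` norm, for `Ω ⊆ B_{1/2} ⊆ ℂ`,
`ζ ∈ closure Ω`, `j ≥ 1` and `u` supported in `Ω` (extended by zero):
`‖∇(g_{j,ζ}u)‖_{L²(B)} = ‖∇u‖_{L²(Ω)}`. -/
theorem g_op_isometry (j : ℕ) (hj : 1 ≤ j)
    (Ω : Set ℂ) (hΩ : Ω ⊆ ball (0 : ℂ) (1/2)) (ζ : ℂ) (hζ : ζ ∈ closure Ω)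
    (u : ℂ → ℝ) (hu : ContDiff ℝ 1 u) (hsupp : tsupport u ⊆ Ω) :
    ∫ z in ball (0 : ℂ) 1,
        ‖fderiv ℝ (fun w : ℂ => ((j : ℝ)) ^ (-(1:ℝ)/2) * u (ζ + w ^ j)) z‖ ^ 2
      = ∫ z : ℂ, ‖fderiv ℝ u z‖ ^ 2 := by
  have hj0 : j ≠ 0 := by omega
  have hζ_norm : ‖ζ‖ ≤ 1 / 2 := by
    simpa using closure_ball_subset_closedBall (closure_mono hΩ hζ)
  have hfderiv_zero : ∀ w, 1 / 2 ≤ ‖w‖ → fderiv ℝ u w = 0 := fun w hw => by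
    by_contra hne
    have := mem_ball_zero_iff.mp (hΩ (hsupp (support_fderiv_subset ℝ hne)))
    linarith
  have hvanish : ∀ z ∉ ball (0 : ℂ) 1,
      ((j : ℝ) * ‖z‖ ^ (2 * (j - 1))) • ‖fderiv ℝ u (ζ + z ^ j)‖ ^ 2 = 0 := fun z hz => by
    have hpow : 1 ≤ ‖z ^ j‖ := norm_pow z j ▸ one_le_pow₀ (by simpa using hz)
    have hfar : 1 / 2 ≤ ‖ζ + z ^ j‖ := by
      have := norm_sub_le (ζ + z ^ j) ζ
      rw [add_sub_cancel_left] at this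
      linarith
    simp [hfderiv_zero _ hfar]
  calc ∫ z in ball (0 : ℂ) 1,
        ‖fderiv ℝ (fun w : ℂ => ((j : ℝ)) ^ (-(1:ℝ)/2) * u (ζ + w ^ j)) z‖ ^ 2
      = ∫ z in ball (0 : ℂ) 1,
          ((j : ℝ) * ‖z‖ ^ (2 * (j - 1))) • ‖fderiv ℝ u (ζ + z ^ j)‖ ^ 2 := by
        simp_rw [sq_norm_fderiv_rescaled_comp_add_pow hj0 (hu.differentiable one_ne_zero _),
          smul_eq_mul]
    _ = ∫ z, ((j : ℝ) * ‖z‖ ^ (2 * (j - 1))) • ‖fderiv ℝ u (ζ + z ^ j)‖ ^ 2 :=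
        setIntegral_eq_integral_of_forall_compl_eq_zero hvanish
    _ = ∫ w, ‖fderiv ℝ u (ζ + w)‖ ^ 2 :=
        Complex.integral_comp_pow hj0 (((measurable_fderiv ℝ u).comp
          (measurable_const_add ζ)).norm.pow_const 2).aestronglyMeasurable
    _ = ∫ z : ℂ, ‖fderiv ℝ u z‖ ^ 2 := integral_add_left_eq_self (fun w => ‖fderiv ℝ u w‖ ^ 2) ζ
end
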